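/- Let μ_1,…,μ_n be probability measures on ℝ^n and let G ⊆ supp μ_1 × ⋯ × supp μ_n be a Borel set with (μ_1×⋯×μ_n)(G) ≥ 1−ε such that for every (x_1,…,x_n) ∈ G, every δ > 0 and every j, μ_j of the δ-neighborhood of the affine span of x_1,…,x_n is at most K·δ^σ (with σ, K > 0 and 0 < ε < 1/2). For each i define E_i = { x ∈ supp μ_i : (∏_{i' ≠ i} μ_{i'})(G|_{x_i = x}) ≥ 1/2 }, where G|_{x_i = x} is the section of G at x in the i-th coordinate. Then μ_i(E_i) ≥ 1 − 2ε, and the restricted measure μ_i|_{E_i} is (2^σ·K, σ)-Frostman: μ_i(E_i ∩ B(y,δ)) ≤ 2^σ·K·δ^σ for every y ∈ ℝ^n and δ > 0. -/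

import Mathlib

open MeasureTheory Metric Set

noncomputable section

/-- `ℝⁿ` as a Euclidean space. -/
abbrev Euc (n : ℕ) : Type := EuclideanSpace ℝ (Fin n)

/-- The topological support of a measure on `ℝⁿ`. -/
def msupp {n : ℕ} (μ : Measure (Euc n)) : Set (Euc n) :=
  {x | ∀ r : ℝ, 0 < r → 0 < μ (ball x r)}

/-- `μ` is a `(C, s)`-Frostman measure. -/
def Frostman {n : ℕ} (μ : Measure (Euc n)) (C s : ℝ) : Prop :=
  ∀ (x : Euc n) (r : ℝ), 0 < r → μ (ball x r) ≤ ENNReal.ofReal (C * r ^ s)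

/-- `μ` is irreducible in the affine subspace `V`. -/
def IrreducibleIn {n : ℕ} (μ : Measure (Euc n)) (V : AffineSubspace ℝ (Euc n)) : Prop :=
  ∀ V' : AffineSubspace ℝ (Euc n), V' < V → μ (V' : Set (Euc n)) = 0

/-- `μ` is `(w, τ)`-irreducible in the affine subspace `V`. -/
def WTIrreducible {n : ℕ} (μ : Measure (Euc n)) (V : AffineSubspace ℝ (Euc n)) (w τ : ℝ) : Prop :=
  ∀ H : AffineSubspace ℝ (Euc n), H < V →
    μ (thickening w (H : Set (Euc n))) ≤ ENNReal.ofReal τ * μ (closedBall 0 1)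

/-- Measures `μ i` are in `C`-good position: supports in the closed unit ball, and the
product of the supports is `1/C`-separated from the affinely dependent tuples. -/
def GoodPosition {n : ℕ} {ι : Type} [Fintype ι] (μ : ι → Measure (Euc n)) (C : ℝ) : Prop :=
  (∀ i, msupp (μ i) ⊆ closedBall 0 1) ∧
  ∀ x : ι → Euc n, (∀ i, x i ∈ msupp (μ i)) →
    ∀ y : ι → Euc n, ¬ AffineIndependent ℝ y → 1 / C ≤ dist x y

/-- The measures `μ i`, `i : ι`, span `(σ, K, c)`-thin `(|ι| - 1)`-planes. -/
def SpansThin {n : ℕ} {ι : Type} [Fintype ι] (μ : ι → Measure (Euc n)) (σ K c : ℝ) : Prop :=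
  ∃ G : Set (ι → Euc n), MeasurableSet G ∧
    G ⊆ Set.univ.pi (fun i => msupp (μ i)) ∧
    ENNReal.ofReal c ≤ Measure.pi μ G ∧
    ∀ x ∈ G, ∀ δ : ℝ, 0 < δ → ∀ j : ι,
      μ j (thickening δ ((affineSpan ℝ (Set.range x) : AffineSubspace ℝ (Euc n)) : Set (Euc n))) ≤
        ENNReal.ofReal (K * δ ^ σ)

/-- A set `X ⊆ ℝⁿ` is non-concentrated (NC). -/
def NCSet {n : ℕ} (X : Set (Euc n)) : Prop :=
  ∀ (r : ℕ) (F : Fin r → AffineSubspace ℝ (Euc n)),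
    (∑ i, Module.finrank ℝ (F i).direction) + 1 ≤ n →
    dimH (X \ ⋃ i, (F i : Set (Euc n))) = dimH X

/-- A collection of affine flats is non-concentrated (NC). -/
def NCFlats {n m : ℕ} (V : Fin m → AffineSubspace ℝ (Euc n)) : Prop :=
  ∀ (r : ℕ) (F : Fin r → AffineSubspace ℝ (Euc n)),
    (⋃ j, (V j : Set (Euc n))) ⊆ (⋃ i, (F i : Set (Euc n))) →
    n ≤ ∑ i, Module.finrank ℝ (F i).direction

/-- Combine a point `x` in slot `i` with a tuple `y` on the remaining slots. -/
def combineAt {n : ℕ} (i : Fin n) (x : Euc n) (y : {i' : Fin n // i' ≠ i} → Euc n) :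
    Fin n → Euc n :=
  fun i' => if h : i' = i then x else y ⟨i', h⟩

/-- The set `E_i` of points of `supp (μ i)` whose section of `G` has measure at least `1/2`. -/
def goodSection {n : ℕ} (μ : Fin n → Measure (Euc n)) (G : Set (Fin n → Euc n)) (i : Fin n) :
    Set (Euc n) :=
  {x | x ∈ msupp (μ i) ∧
    (1 : ENNReal) / 2 ≤
      Measure.pi (fun i' : {i' : Fin n // i' ≠ i} => μ i'.1) {y | combineAt i x y ∈ G}}

/-!
Splitting off the `i`-th coordinate, `μ₁ × ⋯ × μₙ` becomes `μᵢ × ν` with `ν` the product of the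
other measures, and Markov's inequality applied to `x ↦ ν(section of Gᶜ at x)` shows that the
points whose section of `G` has `ν`-measure `< 1/2` carry at most `2ε` of `μᵢ`; the complement of
the support is `μᵢ`-null. For the Frostman bound, a point `x ∈ Eᵢ` has a nonempty section, so it
lies on the affine span of some tuple in `G`; if `x ∈ B(y, δ)`, then `Eᵢ ∩ B(y, δ)` lies in the
`2δ`-neighbourhood of that span, which has `μᵢ`-measure at most `K (2δ)^σ`.
-/

open scoped ENNReal

lemma msupp_eq_support {n : ℕ} (μ : Measure (Euc n)) : msupp μ = μ.support := by
  ext x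
  exact nhds_basis_ball.mem_measureSupport.symm

lemma measure_compl_msupp {n : ℕ} (μ : Measure (Euc n)) : μ (msupp μ)ᶜ = 0 := by
  rw [msupp_eq_support]
  exact Measure.measure_compl_support

lemma measure_setOf_measure_prodMk_lt_half_le {α β : Type*} [MeasurableSpace α]
    [MeasurableSpace β] (μ : Measure α) (ν : Measure β) [IsProbabilityMeasure ν]
    {S : Set (α × β)} (hS : MeasurableSet S) :
    μ {x | ν (Prod.mk x ⁻¹' S) < 2⁻¹} ≤ 2 * μ.prod ν Sᶜ := by
  set B := {x | 2⁻¹ ≤ ν (Prod.mk x ⁻¹' Sᶜ)}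
  have hsub : {x | ν (Prod.mk x ⁻¹' S) < 2⁻¹} ⊆ B := by
    intro x hx
    calc (2⁻¹ : ℝ≥0∞) = 1 - 2⁻¹ := ENNReal.one_sub_inv_two.symm
      _ ≤ 1 - ν (Prod.mk x ⁻¹' S) := tsub_le_tsub_left hx.le 1
      _ = ν (Prod.mk x ⁻¹' Sᶜ) := (prob_compl_eq_one_sub (measurable_prodMk_left hS)).symm
  have markov : 2⁻¹ * μ B ≤ μ.prod ν Sᶜ := by
    rw [Measure.prod_apply hS.compl]
    exact mul_meas_ge_le_lintegral₀ (measurable_measure_prodMk_left hS.compl).aemeasurable _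
  calc μ {x | ν (Prod.mk x ⁻¹' S) < 2⁻¹} ≤ μ B := measure_mono hsub
    _ = 2 * (2⁻¹ * μ B) := by
      rw [← mul_assoc, ENNReal.mul_inv_cancel two_ne_zero ENNReal.ofNat_ne_top, one_mul]
    _ ≤ 2 * μ.prod ν Sᶜ := by gcongr

section SplitAt

variable {ι α : Type*} [DecidableEq ι] [MeasurableSpace α] (i : ι)

def MeasurableEquiv.funSplitAt : (ι → α) ≃ᵐ α × ({j : ι // j ≠ i} → α) where
  toEquiv := Equiv.funSplitAt i α
  measurable_toFun :=
    (measurable_pi_apply i).prodMk (measurable_pi_lambda _ fun j ↦ measurable_pi_apply j.1)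
  measurable_invFun := by
    refine measurable_pi_lambda _ fun j ↦ ?_
    change Measurable fun c ↦ (Equiv.funSplitAt i α).symm c j
    simp only [Equiv.funSplitAt_symm_apply]
    split_ifs with h
    · subst h
      exact measurable_fst
    · exact (measurable_pi_apply _).comp measurable_snd

lemma measurePreserving_funSplitAt [Fintype ι] (μ : ι → Measure α) [∀ j, SigmaFinite (μ j)] :
    MeasurePreserving (MeasurableEquiv.funSplitAt i) (Measure.pi μ)
      ((μ i).prod (Measure.pi fun j : {j : ι // j ≠ i} => μ j)) := by
  have hsplit := measurePreserving_piEquivPiSubtypeProd μ (· = i)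
  have hunique : MeasurePreserving (MeasurableEquiv.piUnique fun _ : {j : ι // j = i} ↦ α)
      (Measure.pi fun j : {j : ι // j = i} ↦ μ j) (μ i) := by
    convert measurePreserving_piUnique fun j : {j : ι // j = i} ↦ μ j
    rfl
  exact (hunique.prod (MeasurePreserving.id _)).comp (by convert hsplit)

end SplitAt

lemma measure_inter_ball_le_of_mem_thin {X : Type*} [PseudoMetricSpace X] [MeasurableSpace X]
    (μ : Measure X) {E : Set X} {f : ℝ → ℝ≥0∞}
    (hE : ∀ x ∈ E, ∃ T : Set X, x ∈ T ∧ ∀ r, 0 < r → μ (thickening r T) ≤ f r)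
    (y : X) {δ : ℝ} (hδ : 0 < δ) :
    μ (E ∩ ball y δ) ≤ f (2 * δ) := by
  rcases (E ∩ ball y δ).eq_empty_or_nonempty with hempty | ⟨x, hxE, hxy⟩
  · simp [hempty]
  obtain ⟨T, hxT, hT⟩ := hE x hxE
  have hsub : E ∩ ball y δ ⊆ thickening (2 * δ) T := by
    refine fun w hw ↦ ball_subset_thickening hxT _ (mem_ball.2 ?_)
    calc dist w x ≤ dist w y + dist x y := dist_triangle_right _ _ _
      _ < δ + δ := add_lt_add (mem_ball.1 hw.2) (mem_ball.1 hxy)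
      _ = 2 * δ := by ring
  exact (measure_mono hsub).trans (hT _ (by positivity))

section GoodSection

variable {n : ℕ} {μ : Fin n → Measure (Euc n)} {G : Set (Fin n → Euc n)}

lemma funSplitAt_symm_eq_combineAt (i : Fin n) (x : Euc n) (y : {j : Fin n // j ≠ i} → Euc n) :
    (MeasurableEquiv.funSplitAt i).symm (x, y) = combineAt i x y :=
  funext <| Equiv.funSplitAt_symm_apply i _ (x, y)

lemma measure_compl_goodSection_le [∀ j, IsProbabilityMeasure (μ j)] (hG : MeasurableSet G)
    (i : Fin n) : μ i (goodSection μ G i)ᶜ ≤ 2 * Measure.pi μ Gᶜ := by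
  set ν := Measure.pi fun j : {j : Fin n // j ≠ i} ↦ μ j
  set S := (MeasurableEquiv.funSplitAt i).symm ⁻¹' G
  have hS : MeasurableSet S := hG.preimage (MeasurableEquiv.funSplitAt i).symm.measurable
  have hsection (x : Euc n) : {y | combineAt i x y ∈ G} = Prod.mk x ⁻¹' S := by
    ext y
    simp [S, funSplitAt_symm_eq_combineAt]
  have hsub : (goodSection μ G i)ᶜ ⊆ (msupp (μ i))ᶜ ∪ {x | ν (Prod.mk x ⁻¹' S) < 2⁻¹} := by
    intro x hx
    simpa only [goodSection, mem_compl_iff, mem_ofPred_eq, not_and_or, not_le, one_div,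
      hsection, mem_union] using hx
  have hGc : (μ i).prod ν Sᶜ = Measure.pi μ Gᶜ :=
    (MeasurePreserving.symm _ (measurePreserving_funSplitAt i μ)).measure_preimage
      hG.compl.nullMeasurableSet
  calc μ i (goodSection μ G i)ᶜ
      ≤ μ i (msupp (μ i))ᶜ + μ i {x | ν (Prod.mk x ⁻¹' S) < 2⁻¹} :=
        (measure_mono hsub).trans (measure_union_le _ _)
    _ = μ i {x | ν (Prod.mk x ⁻¹' S) < 2⁻¹} := by rw [measure_compl_msupp, zero_add]
    _ ≤ 2 * Measure.pi μ Gᶜ := hGc ▸ measure_setOf_measure_prodMk_lt_half_le _ _ hS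

lemma ofReal_one_sub_two_mul_le_measure_goodSection [∀ j, IsProbabilityMeasure (μ j)] {ε : ℝ}
    (hε : 0 ≤ ε) (hG : MeasurableSet G) (hGbig : ENNReal.ofReal (1 - ε) ≤ Measure.pi μ G)
    (i : Fin n) : ENNReal.ofReal (1 - 2 * ε) ≤ μ i (goodSection μ G i) := by
  have hGc : Measure.pi μ Gᶜ ≤ ENNReal.ofReal ε := by
    rw [prob_compl_eq_one_sub hG, tsub_le_iff_right]
    calc (1 : ℝ≥0∞) = ENNReal.ofReal (ε + (1 - ε)) := by simp
      _ ≤ ENNReal.ofReal ε + ENNReal.ofReal (1 - ε) := ENNReal.ofReal_add_le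
      _ ≤ ENNReal.ofReal ε + Measure.pi μ G := by gcongr
  calc ENNReal.ofReal (1 - 2 * ε) = 1 - 2 * ENNReal.ofReal ε := by
        rw [ENNReal.ofReal_sub _ (by positivity), ENNReal.ofReal_mul zero_le_two,
          ENNReal.ofReal_one, ENNReal.ofReal_ofNat]
    _ ≤ 1 - μ i (goodSection μ G i)ᶜ :=
        tsub_le_tsub_left ((measure_compl_goodSection_le hG i).trans (by gcongr)) 1
    _ ≤ μ i (goodSection μ G i) := by
        rw [tsub_le_iff_right, ← measure_univ (μ := μ i)]
        exact measure_univ_le_add_compl _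

lemma exists_combineAt_mem_of_mem_goodSection {i : Fin n} {x : Euc n} (hx : x ∈ goodSection μ G i) :
    ∃ y, combineAt i x y ∈ G :=
  nonempty_of_measure_ne_zero ((by norm_num : (0 : ℝ≥0∞) < 1 / 2).trans_le hx.2).ne'

lemma measure_goodSection_inter_ball_le {σ K : ℝ}
    (hthin : ∀ x ∈ G, ∀ δ : ℝ, 0 < δ → ∀ j,
      μ j (thickening δ
          ((affineSpan ℝ (Set.range x) : AffineSubspace ℝ (Euc n)) : Set (Euc n))) ≤
        ENNReal.ofReal (K * δ ^ σ))
    (i : Fin n) (y : Euc n) {δ : ℝ} (hδ : 0 < δ) :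
    μ i (goodSection μ G i ∩ ball y δ) ≤ ENNReal.ofReal (2 ^ σ * K * δ ^ σ) := by
  have hE : ∀ x ∈ goodSection μ G i, ∃ T : Set (Euc n), x ∈ T ∧
      ∀ r, 0 < r → μ i (thickening r T) ≤ ENNReal.ofReal (K * r ^ σ) := by
    intro x hx
    obtain ⟨z, hz⟩ := exists_combineAt_mem_of_mem_goodSection hx
    have hxz : x ∈ affineSpan ℝ (range (combineAt i x z)) :=
      subset_affineSpan ℝ _ ⟨i, by simp [combineAt]⟩
    exact ⟨_, hxz, fun r hr ↦ hthin _ hz r hr i⟩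
  calc μ i (goodSection μ G i ∩ ball y δ) ≤ ENNReal.ofReal (K * (2 * δ) ^ σ) :=
        measure_inter_ball_le_of_mem_thin (μ i) hE y hδ
    _ = ENNReal.ofReal (2 ^ σ * K * δ ^ σ) := by
        rw [Real.mul_rpow zero_le_two hδ.le]
        ring_nf

end GoodSection

theorem stmt_19_general {n : ℕ} (μ : Fin n → Measure (Euc n))
    (hprob : ∀ i, IsProbabilityMeasure (μ i))
    (σ K ε : ℝ) (hε0 : 0 < ε)
    (G : Set (Fin n → Euc n)) (hGmeas : MeasurableSet G)
    (hGbig : ENNReal.ofReal (1 - ε) ≤ Measure.pi μ G)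
    (hthin : ∀ x ∈ G, ∀ δ : ℝ, 0 < δ → ∀ j,
      μ j (thickening δ
          ((affineSpan ℝ (Set.range x) : AffineSubspace ℝ (Euc n)) : Set (Euc n))) ≤
        ENNReal.ofReal (K * δ ^ σ)) :
    ∀ i, ENNReal.ofReal (1 - 2 * ε) ≤ μ i (goodSection μ G i) ∧
      ∀ (y : Euc n) (δ : ℝ), 0 < δ →
        μ i (goodSection μ G i ∩ ball y δ) ≤ ENNReal.ofReal (2 ^ σ * K * δ ^ σ) :=
  fun i ↦ ⟨ofReal_one_sub_two_mul_le_measure_goodSection hε0.le hGmeas hGbig i,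
    fun _ _ hδ ↦ measure_goodSection_inter_ball_le hthin i _ hδ⟩

/-- Sections of a thin hyperplane graph give restricted Frostman measures.
If `G` is a `(σ, K, 1-ε)`-thin hyperplanes graph for `μ 1, …, μ n` with `ε < 1/2`, then each
set `E i = goodSection μ G i` satisfies `μ i (E i) ≥ 1 - 2ε` and `μ i` restricted to `E i` is
`(2^σ·K, σ)`-Frostman. -/
theorem stmt_19 {n : ℕ} (μ : Fin n → Measure (Euc n))
    (hprob : ∀ i, IsProbabilityMeasure (μ i))
    (σ K ε : ℝ) (hσ : 0 < σ) (hK : 0 < K) (hε0 : 0 < ε) (hε : ε < 1 / 2)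
    (G : Set (Fin n → Euc n)) (hGmeas : MeasurableSet G)
    (hGsub : G ⊆ Set.univ.pi fun i => msupp (μ i))
    (hGbig : ENNReal.ofReal (1 - ε) ≤ Measure.pi μ G)
    (hthin : ∀ x ∈ G, ∀ δ : ℝ, 0 < δ → ∀ j,
      μ j (thickening δ
          ((affineSpan ℝ (Set.range x) : AffineSubspace ℝ (Euc n)) : Set (Euc n))) ≤
        ENNReal.ofReal (K * δ ^ σ)) :
    ∀ i, ENNReal.ofReal (1 - 2 * ε) ≤ μ i (goodSection μ G i) ∧
      ∀ (y : Euc n) (δ : ℝ), 0 < δ →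
        μ i (goodSection μ G i ∩ ball y δ) ≤ ENNReal.ofReal (2 ^ σ * K * δ ^ σ) :=
  stmt_19_general μ hprob σ K ε hε0 G hGmeas hGbig hthin
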